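/- arXiv:2311.10901 — 3 statements merged into one kernel-verified Lean document; each statement's English description precedes it below -/
import Mathlib

section
/- For every natural n, integer t with 0 < t <= n/2, and x in [0,1], the quantity S_{n,t}(x) := sum over k from t to n-t of |k/n - x| * p_{n,k}(x) satisfies S_{n,t}(x) <= x*(1-x) / sqrt(t/2). -/
/-!
Write `B k = bernstein n k x`. By Cauchy–Schwarz, `S² ≤ (∑ (k/n - x)² B k) * (∑ B k)`, both sums
over the window `t ≤ k ≤ n - t`. The first factor is at most the variance `x(1-x)/n`. On the window
`k(n-k) ≥ tn/2`, so the second is at most `2/(tn) * ∑ k(n-k) B k = 2(n-1)x(1-x)/t`, by the first two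
factorial moments of the binomial distribution. Hence `S² ≤ (2/t) (x(1-x))²`.
-/

open Finset unitInterval

namespace bernstein

section Moments

variable (n : ℕ) (x : I)

lemma eq_eval_bernsteinPolynomial (k : ℕ) :
    bernstein n k x = (bernsteinPolynomial ℝ n k).eval (x : ℝ) := rfl

lemma sum_range_natCast_mul :
    ∑ k ∈ range (n + 1), (k : ℝ) * bernstein n k x = n * x := by
  simpa [Polynomial.eval_finsetSum, eq_eval_bernsteinPolynomial] using
    congr_arg (Polynomial.eval (x : ℝ)) (bernsteinPolynomial.sum_smul ℝ n)

lemma sum_range_natCast_mul_natCast_sub_one :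
    ∑ k ∈ range (n + 1), (k : ℝ) * (k - 1) * bernstein n k x = n * (n - 1) * x ^ 2 := by
  have hcast (m : ℕ) : (m : ℝ) * ((m - 1 : ℕ) : ℝ) = m * (m - 1) := by cases m <;> simp
  simpa [Polynomial.eval_finsetSum, eq_eval_bernsteinPolynomial, hcast] using
    congr_arg (Polynomial.eval (x : ℝ)) (bernsteinPolynomial.sum_mul_smul ℝ n)

lemma sum_range_natCast_mul_sub :
    ∑ k ∈ range (n + 1), (k : ℝ) * (n - k) * bernstein n k x = n * (n - 1) * (x * (1 - x)) := by
  have hsplit (k : ℕ) : (k : ℝ) * (n - k) * bernstein n k x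
      = (n - 1) * ((k : ℝ) * bernstein n k x) - (k : ℝ) * (k - 1) * bernstein n k x := by ring
  simp only [hsplit, sum_sub_distrib, ← mul_sum, sum_range_natCast_mul,
    sum_range_natCast_mul_natCast_sub_one]
  ring

lemma sum_range_div_sub_sq (hn : n ≠ 0) :
    ∑ k ∈ range (n + 1), ((k : ℝ) / n - x) ^ 2 * bernstein n k x = x * (1 - x) / n := by
  rw [← variance hn x,
    ← Fin.sum_univ_eq_sum_range (fun k => ((k : ℝ) / n - x) ^ 2 * bernstein n k x)]
  refine sum_congr rfl fun k _ => ?_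
  simp only [z]
  ring

end Moments

section Window

variable {n t : ℕ} (x : I)

lemma sum_Icc_le (ht : 0 < t) (htn : 2 * t ≤ n) :
    ∑ k ∈ Icc t (n - t), bernstein n k x ≤ 2 * (n - 1) / t * (x * (1 - x)) := by
  have htR : (0 : ℝ) < t := by exact_mod_cast ht
  have hweight : ∀ k ∈ Icc t (n - t), (t : ℝ) * n / 2 ≤ k * (n - k) := by
    intro k hk
    rw [mem_Icc] at hk
    have hkt : (t : ℝ) ≤ k := by exact_mod_cast hk.1
    have hkn : (k : ℝ) + t ≤ n := by exact_mod_cast (by omega : k + t ≤ n)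
    have htn' : 2 * (t : ℝ) ≤ n := by exact_mod_cast htn
    -- `k * (n - k) ≥ t * (n - t)` by concavity, and `n - t ≥ n / 2`
    nlinarith [mul_nonneg (sub_nonneg.mpr hkt) (sub_nonneg.mpr hkn)]
  have hsum : (t : ℝ) * n / 2 * ∑ k ∈ Icc t (n - t), bernstein n k x
      ≤ n * (n - 1) * (x * (1 - x)) := by
    rw [mul_sum, ← sum_range_natCast_mul_sub]
    calc ∑ k ∈ Icc t (n - t), (t : ℝ) * n / 2 * bernstein n k x
        ≤ ∑ k ∈ Icc t (n - t), (k : ℝ) * (n - k) * bernstein n k x :=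
          sum_le_sum fun k hk => mul_le_mul_of_nonneg_right (hweight k hk) bernstein_nonneg
      _ ≤ ∑ k ∈ range (n + 1), (k : ℝ) * (n - k) * bernstein n k x := by
          refine sum_le_sum_of_subset_of_nonneg (fun k hk => ?_) fun k hk _ => ?_
          · simp only [mem_Icc, mem_range] at hk ⊢
            omega
          · have hkn : (k : ℝ) ≤ n := by exact_mod_cast Nat.lt_succ_iff.mp (mem_range.mp hk)
            have := sub_nonneg.mpr hkn
            positivity
  rw [div_mul_eq_mul_div, le_div_iff₀ htR]
  have hnR : (0 : ℝ) < n := by exact_mod_cast (by omega : 0 < n)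
  nlinarith

lemma sq_sum_Icc_abs_div_sub_mul_le (ht : 0 < t) (htn : 2 * t ≤ n) :
    (∑ k ∈ Icc t (n - t), |(k : ℝ) / n - x| * bernstein n k x) ^ 2
      ≤ 2 / t * (x * (1 - x)) ^ 2 := by
  have hn : n ≠ 0 := by omega
  have hnR : (0 : ℝ) < n := by exact_mod_cast Nat.pos_of_ne_zero hn
  have hx : 0 ≤ (x : ℝ) * (1 - x) := mul_nonneg x.2.1 (sub_nonneg.mpr x.2.2)
  have hvar : ∑ k ∈ Icc t (n - t), ((k : ℝ) / n - x) ^ 2 * bernstein n k x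
      ≤ x * (1 - x) / n := by
    rw [← sum_range_div_sub_sq n x hn]
    refine sum_le_sum_of_subset_of_nonneg (fun k hk => ?_) fun k _ _ => by positivity
    simp only [mem_Icc, mem_range] at hk ⊢
    omega
  have hn1 : ((n : ℝ) - 1) / n ≤ 1 := by rw [div_le_one hnR]; linarith
  calc (∑ k ∈ Icc t (n - t), |(k : ℝ) / n - x| * bernstein n k x) ^ 2
      ≤ (∑ k ∈ Icc t (n - t), ((k : ℝ) / n - x) ^ 2 * bernstein n k x)
          * ∑ k ∈ Icc t (n - t), bernstein n k x :=
        sum_sq_le_sum_mul_sum_of_sq_le_mul _ (fun k _ => by positivity)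
          (fun k _ => bernstein_nonneg) fun k _ => le_of_eq (by rw [mul_pow, sq_abs]; ring)
    _ ≤ x * (1 - x) / n * (2 * (n - 1) / t * (x * (1 - x))) :=
        mul_le_mul hvar (sum_Icc_le x ht htn) (sum_nonneg fun k _ => bernstein_nonneg)
          (by positivity)
    _ = ((n : ℝ) - 1) / n * (2 / t * ((x : ℝ) * (1 - x)) ^ 2) := by ring
    _ ≤ 2 / t * (x * (1 - x)) ^ 2 := mul_le_of_le_one_left (by positivity) hn1

end Window

end bernstein

theorem S_nt_bound (n t : ℕ) (ht : 0 < t) (ht2 : 2 * t ≤ n)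
    (x : ℝ) (hx : x ∈ Set.Icc (0:ℝ) 1) :
    ∑ k ∈ Finset.Icc t (n - t),
      |(k : ℝ) / n - x| * ((n.choose k : ℝ) * x ^ k * (1 - x) ^ (n - k))
      ≤ x * (1 - x) / Real.sqrt ((t : ℝ) / 2) := by
  have hsq := bernstein.sq_sum_Icc_abs_div_sub_mul_le ⟨x, hx⟩ ht ht2
  simp only [bernstein_apply] at hsq
  rw [le_div_iff₀ (Real.sqrt_pos.mpr (by positivity))]
  refine le_of_sq_le_sq ?_ (mul_nonneg hx.1 (sub_nonneg.mpr hx.2))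
  rw [mul_pow, Real.sq_sqrt (by positivity)]
  calc _ ≤ 2 / t * (x * (1 - x)) ^ 2 * (t / 2) := by gcongr
    _ = (x * (1 - x)) ^ 2 := by field_simp
end

section
/- For every continuous function f on [0,1] and every natural n >= 1, the Bernstein polynomial B_n(f)(x) = sum_{k=0}^n f(k/n) binom(n,k) x^k (1-x)^(n-k) satisfies sup_{x in [0,1]} |f(x) - B_n(f)(x)| <= (5/4) * omega_f(n^{-1/2}), where omega_f is the modulus of continuity of f. -/
/-!
Writing `w k` for the Bernstein weights, which are nonnegative and sum to `1`,
`f x - Bₙ f x = ∑ (f x - f (k/n)) w k`. Splitting `[x, k/n]` into `⌈|x - k/n| / δ⌉` pieces of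
length at most `δ` gives `|f x - f (k/n)| ≤ (1 + (x - k/n)² / δ²) ω(δ)`, so the error is at most
`(1 + ∑ w k (x - k/n)² / δ²) ω(δ)`. The Bernstein weights have variance `x (1 - x) / n`, and with
`δ² = 1/n` the bound becomes `(1 + x (1 - x)) ω(n^{-1/2}) ≤ (5/4) ω(n^{-1/2})`.
-/

/-- Modulus of continuity of `f` on `[0,1]`. -/
noncomputable def modCont (f : ℝ → ℝ) (δ : ℝ) : ℝ :=
  sSup {d : ℝ | ∃ x ∈ Set.Icc (0:ℝ) 1, ∃ y ∈ Set.Icc (0:ℝ) 1,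
    |x - y| ≤ δ ∧ d = |f x - f y|}

open Finset Set

lemma Nat.ceil_le_one_add_sq {t : ℝ} (ht : 0 ≤ t) : (⌈t⌉₊ : ℝ) ≤ 1 + t ^ 2 := by
  rcases le_or_gt t 1 with ht1 | ht1
  · have : ⌈t⌉₊ ≤ 1 := Nat.ceil_le.mpr (by simpa using ht1)
    have : (⌈t⌉₊ : ℝ) ≤ 1 := by exact_mod_cast this
    nlinarith
  · nlinarith [Nat.ceil_lt_add_one ht]

section ModulusOfContinuity

variable {f : ℝ → ℝ}

lemma modCont_bddAbove (hf : ContinuousOn f (Icc 0 1)) (δ : ℝ) :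
    BddAbove {d : ℝ | ∃ x ∈ Icc (0:ℝ) 1, ∃ y ∈ Icc (0:ℝ) 1, |x - y| ≤ δ ∧ d = |f x - f y|} := by
  obtain ⟨C, hC⟩ := isCompact_Icc.exists_bound_of_continuousOn hf
  refine ⟨C + C, ?_⟩
  rintro d ⟨a, ha, b, hb, -, rfl⟩
  exact (abs_sub _ _).trans (add_le_add (hC a ha) (hC b hb))

lemma abs_sub_le_modCont (hf : ContinuousOn f (Icc 0 1)) {δ a b : ℝ} (ha : a ∈ Icc (0:ℝ) 1)
    (hb : b ∈ Icc (0:ℝ) 1) (hab : |a - b| ≤ δ) : |f a - f b| ≤ modCont f δ :=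
  le_csSup (modCont_bddAbove hf δ) ⟨a, ha, b, hb, hab, rfl⟩

lemma modCont_nonneg (hf : ContinuousOn f (Icc 0 1)) {δ : ℝ} (hδ : 0 ≤ δ) :
    0 ≤ modCont f δ := by
  simpa using abs_sub_le_modCont hf (a := 0) (b := 0) (by simp) (by simp) (by simpa using hδ)

lemma abs_sub_le_natCast_mul_modCont (hf : ContinuousOn f (Icc 0 1)) {δ a b : ℝ} (m : ℕ)
    (ha : a ∈ Icc (0:ℝ) 1) (hb : b ∈ Icc (0:ℝ) 1) (hab : |a - b| ≤ m * δ) :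
    |f a - f b| ≤ m * modCont f δ := by
  induction m generalizing a with
  | zero =>
    have : a = b := sub_eq_zero.mp (abs_nonpos_iff.mp (by simpa using hab))
    simp [this]
  | succ m ih =>
    have hm : (0:ℝ) < m + 1 := by positivity
    set c := a + (m + 1 : ℝ)⁻¹ • (b - a) with hc
    have hc_mem : c ∈ Icc (0:ℝ) 1 :=
      (convex_Icc 0 1).add_smul_sub_mem ha hb ⟨by positivity, inv_le_one_of_one_le₀ (by simp)⟩
    have hac : |a - c| = |a - b| / (m + 1) := by
      rw [show a - c = (a - b) / (m + 1) by rw [hc, smul_eq_mul]; field_simp; ring, abs_div,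
        abs_of_pos hm]
    have hcb : |c - b| = m * (|a - b| / (m + 1)) := by
      rw [show c - b = m * ((a - b) / (m + 1)) by rw [hc, smul_eq_mul]; field_simp; ring, abs_mul,
        abs_div, abs_of_pos hm, Nat.abs_cast]
    push_cast at hab ⊢
    have hstep : |a - b| / (m + 1) ≤ δ := by rwa [div_le_iff₀ hm, mul_comm]
    calc |f a - f b| ≤ |f a - f c| + |f c - f b| := abs_sub_le _ _ _
      _ ≤ modCont f δ + m * modCont f δ :=
          add_le_add (abs_sub_le_modCont hf ha hc_mem (hac ▸ hstep))
            (ih hc_mem (hcb ▸ mul_le_mul_of_nonneg_left hstep m.cast_nonneg))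
      _ = (m + 1) * modCont f δ := by ring

lemma abs_sub_le_one_add_sq_div_mul_modCont (hf : ContinuousOn f (Icc 0 1)) {δ a b : ℝ}
    (hδ : 0 < δ) (ha : a ∈ Icc (0:ℝ) 1) (hb : b ∈ Icc (0:ℝ) 1) :
    |f a - f b| ≤ (1 + (a - b) ^ 2 / δ ^ 2) * modCont f δ := by
  have hceil : |a - b| ≤ ⌈|a - b| / δ⌉₊ * δ := (div_le_iff₀ hδ).mp (Nat.le_ceil _)
  have hsq : (⌈|a - b| / δ⌉₊ : ℝ) ≤ 1 + (a - b) ^ 2 / δ ^ 2 := by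
    simpa only [div_pow, sq_abs] using Nat.ceil_le_one_add_sq (by positivity : 0 ≤ |a - b| / δ)
  exact (abs_sub_le_natCast_mul_modCont hf _ ha hb hceil).trans
    (mul_le_mul_of_nonneg_right hsq (modCont_nonneg hf hδ.le))

lemma abs_sub_sum_mul_le_modCont {ι : Type*} (hf : ContinuousOn f (Icc 0 1)) {δ x : ℝ}
    (hδ : 0 < δ) (hx : x ∈ Icc (0:ℝ) 1) (s : Finset ι) {y w : ι → ℝ}
    (hy : ∀ i ∈ s, y i ∈ Icc (0:ℝ) 1) (hw : ∀ i ∈ s, 0 ≤ w i) (hw₁ : ∑ i ∈ s, w i = 1) :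
    |f x - ∑ i ∈ s, f (y i) * w i|
      ≤ (1 + (∑ i ∈ s, (x - y i) ^ 2 * w i) / δ ^ 2) * modCont f δ := by
  have hsplit : f x - ∑ i ∈ s, f (y i) * w i = ∑ i ∈ s, (f x - f (y i)) * w i := by
    simp only [sub_mul, sum_sub_distrib, ← mul_sum, hw₁, mul_one]
  calc |f x - ∑ i ∈ s, f (y i) * w i|
      ≤ ∑ i ∈ s, |f x - f (y i)| * w i := by
        rw [hsplit]
        refine (abs_sum_le_sum_abs _ _).trans_eq (sum_congr rfl fun i hi => ?_)
        rw [abs_mul, abs_of_nonneg (hw i hi)]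
    _ ≤ ∑ i ∈ s, (1 + (x - y i) ^ 2 / δ ^ 2) * modCont f δ * w i :=
        sum_le_sum fun i hi => mul_le_mul_of_nonneg_right
          (abs_sub_le_one_add_sq_div_mul_modCont hf hδ hx (hy i hi)) (hw i hi)
    _ = (1 + (∑ i ∈ s, (x - y i) ^ 2 * w i) / δ ^ 2) * modCont f δ := by
        simp only [add_mul, one_mul, sum_add_distrib, sum_div, sum_mul]
        rw [← mul_sum, hw₁, mul_one]
        exact congrArg _ (sum_congr rfl fun i _ => by ring)

end ModulusOfContinuity

lemma sum_choose_mul_pow_mul_one_sub_pow {R : Type*} [CommRing R] (n : ℕ) (x : R) :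
    ∑ k ∈ range (n + 1), (n.choose k : R) * x ^ k * (1 - x) ^ (n - k) = 1 := by
  have h := add_pow x (1 - x) n
  rw [add_sub_cancel, one_pow] at h
  exact (sum_congr rfl fun k _ => by ring).trans h.symm

lemma sum_sq_sub_div_mul_choose_mul_pow {n : ℕ} (hn : n ≠ 0) {x : ℝ} (hx : x ∈ Icc (0:ℝ) 1) :
    ∑ k ∈ range (n + 1), (x - k / n) ^ 2 * ((n.choose k : ℝ) * x ^ k * (1 - x) ^ (n - k))
      = x * (1 - x) / n := by
  have h := bernstein.variance hn ⟨x, hx⟩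
  simp only [bernstein.z] at h
  rw [Fin.sum_univ_eq_sum_range (fun k => (x - k / n) ^ 2 * bernstein n k ⟨x, hx⟩)] at h
  simpa only [bernstein_apply] using h

lemma Real.rpow_neg_half_sq {a : ℝ} (ha : 0 ≤ a) : (a ^ (-(1/2 : ℝ))) ^ 2 = a⁻¹ := by
  rw [← Real.rpow_natCast, ← Real.rpow_mul ha]
  norm_num [Real.rpow_neg_one]

theorem bernstein_approx (f : ℝ → ℝ) (hf : ContinuousOn f (Set.Icc (0:ℝ) 1))
    (n : ℕ) (hn : 1 ≤ n) (x : ℝ) (hx : x ∈ Set.Icc (0:ℝ) 1) :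
    |f x - ∑ k ∈ Finset.range (n + 1),
        f ((k : ℝ) / n) * ((n.choose k : ℝ) * x ^ k * (1 - x) ^ (n - k))|
      ≤ 5 / 4 * modCont f ((n : ℝ) ^ (-(1/2 : ℝ))) := by
  have hn0 : (0:ℝ) < n := by exact_mod_cast hn
  have hδ : 0 < (n : ℝ) ^ (-(1/2 : ℝ)) := by positivity
  have hnodes : ∀ k ∈ range (n + 1), (k : ℝ) / n ∈ Icc (0:ℝ) 1 := fun k hk =>
    ⟨by positivity, div_le_one_of_le₀ (by exact_mod_cast Nat.lt_succ_iff.mp (mem_range.mp hk))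
      hn0.le⟩
  have hweights : ∀ k ∈ range (n + 1), 0 ≤ (n.choose k : ℝ) * x ^ k * (1 - x) ^ (n - k) :=
    fun k _ => mul_nonneg (mul_nonneg (Nat.cast_nonneg _) (pow_nonneg hx.1 _))
      (pow_nonneg (sub_nonneg.mpr hx.2) _)
  set ω := modCont f ((n : ℝ) ^ (-(1/2 : ℝ)))
  calc _ ≤ (1 + x * (1 - x) / n / ((n : ℝ) ^ (-(1/2 : ℝ))) ^ 2) * ω := by
        simpa only [sum_sq_sub_div_mul_choose_mul_pow (by omega : n ≠ 0) hx] using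
          abs_sub_sum_mul_le_modCont hf hδ hx (range (n + 1)) hnodes hweights
            (sum_choose_mul_pow_mul_one_sub_pow n x)
    _ = (1 + x * (1 - x)) * ω := by rw [Real.rpow_neg_half_sq hn0.le]; field_simp
    _ ≤ 5 / 4 * ω :=
        mul_le_mul_of_nonneg_right (by nlinarith [sq_nonneg (x - 1/2)]) (modCont_nonneg hf hδ.le)
end

section
/- The union over all n of the Bernstein lattices B_n is dense in C_Z([0,1]) with respect to the uniform metric: for every continuous f on [0,1] with f(0), f(1) integers and every epsilon > 0, there exist n and integers q_0,...,q_n such that |f(x) - sum_{k=0}^n q_k binom(n,k) x^k (1-x)^(n-k)| < epsilon for all x in [0,1]. -/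
/-!
Round the coefficients of the Bernstein approximation `∑ f (k / n) p_{n,k}` to integers. For
`k < K` and `k ≥ n - K` use `f 0` and `f 1`, which `f (k / n)` is uniformly close to. In between,
round the partial sums `S k = ∑_{i < k} f (i / n)` rather than the coefficients: with
`q k = ⌊S (k + 1)⌋ - ⌊S k⌋` the coefficient errors are differences of fractional parts, so summation
by parts bounds their contribution by the total variation of `k ↦ p_{n,k}(x)` plus two of its
values. This sequence is unimodal, so all of that is at most four times its maximum over
`K ≤ k ≤ n - K`, and AM-GM with Stirling's bounds gives
`p_{n,k}(x) ≤ √(n / (k (n - k))) ≤ √(2 / K)` there.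
-/

open Finset Real
open scoped Nat

theorem abs_sum_mul_le_of_abs_le {ι : Type*} {s : Finset ι} {e w : ι → ℝ} {δ : ℝ} (hδ : 0 ≤ δ)
    (he : ∀ i ∈ s, |e i| ≤ δ) (hw : ∀ i ∈ s, 0 ≤ w i) (hsum : ∑ i ∈ s, w i ≤ 1) :
    |∑ i ∈ s, e i * w i| ≤ δ :=
  calc |∑ i ∈ s, e i * w i| ≤ ∑ i ∈ s, δ * w i := by
        refine (abs_sum_le_sum_abs _ _).trans (sum_le_sum fun i hi => ?_)
        rw [abs_mul, abs_of_nonneg (hw i hi)]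
        exact mul_le_mul_of_nonneg_right (he i hi) (hw i hi)
    _ = δ * ∑ i ∈ s, w i := (mul_sum _ _ _).symm
    _ ≤ δ := mul_le_of_le_one_right hδ hsum

theorem abs_sum_sub_mul_le {F w : ℕ → ℝ} {s t : ℕ} (hst : s ≤ t)
    (hF : ∀ k ∈ Icc s t, |F k| ≤ 1) :
    |∑ k ∈ Ico s t, (F (k + 1) - F k) * w k|
      ≤ |w s| + |w t| + ∑ k ∈ Ico s t, |w (k + 1) - w k| := by
  have hparts : ∑ k ∈ Ico s t, (F (k + 1) - F k) * w k
      = F t * w t - F s * w s - ∑ k ∈ Ico s t, F (k + 1) * (w (k + 1) - w k) := by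
    rw [eq_sub_iff_add_eq, ← sum_add_distrib, ← sum_Ico_sub (fun k => F k * w k) hst]
    exact sum_congr rfl fun k _ => by ring
  have hFw : ∀ k ∈ Icc s t, |F k * w k| ≤ |w k| := fun k hk => by
    rw [abs_mul]; exact mul_le_of_le_one_left (abs_nonneg _) (hF k hk)
  have hsum : |∑ k ∈ Ico s t, F (k + 1) * (w (k + 1) - w k)|
      ≤ ∑ k ∈ Ico s t, |w (k + 1) - w k| := by
    refine (abs_sum_le_sum_abs _ _).trans (sum_le_sum fun k hk => ?_)
    rw [mem_Ico] at hk
    rw [abs_mul]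
    exact mul_le_of_le_one_left (abs_nonneg _) (hF (k + 1) (mem_Icc.2 ⟨by omega, by omega⟩))
  rw [hparts]
  linarith [hFw s (mem_Icc.2 ⟨le_rfl, hst⟩), hFw t (mem_Icc.2 ⟨hst, le_rfl⟩),
    abs_sub (F t * w t - F s * w s) (∑ k ∈ Ico s t, F (k + 1) * (w (k + 1) - w k)),
    abs_sub (F t * w t) (F s * w s)]

theorem sum_abs_sub_le_of_unimodal {w : ℕ → ℝ} {s t m : ℕ} {B : ℝ} (hst : s ≤ t)
    (hup : ∀ k ∈ Ico s t, k < m → w k ≤ w (k + 1))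
    (hdown : ∀ k ∈ Ico s t, m ≤ k → w (k + 1) ≤ w k)
    (hw : ∀ k ∈ Icc s t, 0 ≤ w k ∧ w k ≤ B) :
    ∑ k ∈ Ico s t, |w (k + 1) - w k| ≤ 2 * B := by
  set c := max s (min m t)
  have hsc : s ≤ c := le_max_left _ _
  have hct : c ≤ t := max_le hst (min_le_right _ _)
  have hinc : ∑ k ∈ Ico s c, |w (k + 1) - w k| = w c - w s := by
    rw [← sum_Ico_sub w hsc]
    refine sum_congr rfl fun k hk => abs_of_nonneg (sub_nonneg.2 ?_)
    rw [mem_Ico] at hk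
    exact hup k (mem_Ico.2 ⟨hk.1, by omega⟩) (by omega)
  have hdec : ∑ k ∈ Ico c t, |w (k + 1) - w k| = w c - w t := by
    rw [← neg_sub, ← sum_Ico_sub w hct, ← sum_neg_distrib]
    refine sum_congr rfl fun k hk => abs_of_nonpos (sub_nonpos.2 ?_)
    rw [mem_Ico] at hk
    exact hdown k (mem_Ico.2 ⟨by omega, hk.2⟩) (by omega)
  rw [← sum_Ico_consecutive _ hsc hct, hinc, hdec]
  linarith [hw s (mem_Icc.2 ⟨le_rfl, hst⟩), hw t (mem_Icc.2 ⟨hst, le_rfl⟩),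
    hw c (mem_Icc.2 ⟨hsc, hct⟩)]

theorem pow_mul_one_sub_pow_mul_le {x : ℝ} (hx : x ∈ Set.Icc (0 : ℝ) 1) (k m : ℕ) :
    x ^ k * (1 - x) ^ m * ((k + m : ℕ) : ℝ) ^ (k + m) ≤ (k : ℝ) ^ k * (m : ℝ) ^ m := by
  obtain ⟨hx0, hx1⟩ := hx
  rcases Nat.eq_zero_or_pos k with rfl | hk
  · simpa using mul_le_of_le_one_left (by positivity) (pow_le_one₀ (by linarith) (by linarith))
  rcases Nat.eq_zero_or_pos m with rfl | hm
  · simpa using mul_le_of_le_one_left (by positivity) (pow_le_one₀ hx0 hx1)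
  set N : ℝ := ((k + m : ℕ) : ℝ)
  have hK : (0 : ℝ) < k := by exact_mod_cast hk
  have hM : (0 : ℝ) < m := by exact_mod_cast hm
  have hN : N = k + m := by push_cast [N]; ring
  have hNpos : 0 < N := by rw [hN]; positivity
  have hu : 0 ≤ x * N / k := by positivity
  have hv : 0 ≤ (1 - x) * N / m := div_nonneg (mul_nonneg (by linarith) hNpos.le) hM.le
  have hamgm := geom_mean_le_arith_mean2_weighted (div_nonneg hK.le hNpos.le)
    (div_nonneg hM.le hNpos.le) hu hv (by rw [← add_div, ← hN, div_self hNpos.ne'])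
  have hmean : (k : ℝ) / N * (x * N / k) + m / N * ((1 - x) * N / m) = 1 := by
    field_simp; ring
  rw [hmean] at hamgm
  have hpow : ∀ {y : ℝ} (j : ℕ), 0 ≤ y → (y ^ ((j : ℝ) / N)) ^ (k + m) = y ^ j := fun j hy => by
    rw [← rpow_natCast, ← rpow_mul hy, div_mul_cancel₀ _ hNpos.ne', rpow_natCast]
  have := pow_le_one₀ (n := k + m) (by positivity) hamgm
  rw [mul_pow, hpow k hu, hpow m hv, div_pow, div_pow, mul_pow, mul_pow, div_mul_div_comm,
    div_le_one (by positivity)] at this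
  linarith [show x ^ k * (1 - x) ^ m * N ^ (k + m) = x ^ k * N ^ k * ((1 - x) ^ m * N ^ m) by ring]

theorem factorial_le_exp_one_mul_sqrt_mul_pow {n : ℕ} (hn : n ≠ 0) :
    (n ! : ℝ) ≤ exp 1 * √n * (n / exp 1) ^ n := by
  obtain ⟨j, rfl⟩ := Nat.exists_eq_succ_of_ne_zero hn
  have hseq : Stirling.stirlingSeq (j + 1) ≤ exp 1 / √2 := by
    simpa [Stirling.stirlingSeq_one] using Stirling.stirlingSeq'_antitone (Nat.zero_le j)
  have hpos : 0 < √(2 * (j + 1 : ℕ)) * (((j + 1 : ℕ) : ℝ) / exp 1) ^ (j + 1) := by positivity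
  rw [Stirling.stirlingSeq, div_le_iff₀ hpos, sqrt_mul zero_le_two] at hseq
  have h2 : √2 ≠ 0 := by positivity
  refine hseq.trans_eq ?_
  field_simp

theorem choose_mul_pow_mul_pow_mul_sqrt_le {k m : ℕ} (hk : k ≠ 0) (hm : m ≠ 0) :
    ((k + m).choose k : ℝ) * k ^ k * m ^ m * √(k * m)
      ≤ √((k + m : ℕ) : ℝ) * ((k + m : ℕ) : ℝ) ^ (k + m) := by
  set N : ℝ := ((k + m : ℕ) : ℝ)
  set X := ((k + m).choose k : ℝ) * k ^ k * m ^ m * √(k * m)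
  have hfact : ((k + m).choose k : ℝ) * k ! * m ! = (k + m)! := by
    exact_mod_cast (by simpa using Nat.choose_mul_factorial_mul_factorial (Nat.le_add_right k m))
  have hstirling : ((k + m).choose k : ℝ) * (√(2 * π * k) * (k / exp 1) ^ k)
      * (√(2 * π * m) * (m / exp 1) ^ m) ≤ exp 1 * √N * (N / exp 1) ^ (k + m) :=
    calc _ ≤ ((k + m).choose k : ℝ) * k ! * m ! := by
          gcongr <;> exact Stirling.le_factorial_stirling _
      _ = (k + m)! := hfact
      _ ≤ _ := factorial_le_exp_one_mul_sqrt_mul_pow (by omega)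
  have hsqrt : √(2 * π * k) * √(2 * π * m) = 2 * π * √(k * m) := by
    rw [← sqrt_mul (by positivity), show 2 * π * k * (2 * π * m) = (2 * π) ^ 2 * (k * m) by ring,
      sqrt_mul (by positivity), sqrt_sq (by positivity)]
  have hX : X * (2 * π) ≤ exp 1 * (√N * N ^ (k + m)) := by
    rw [← mul_le_mul_iff_of_pos_right (by positivity : (0 : ℝ) < exp 1 ^ (k + m))] at hstirling
    calc X * (2 * π)
        = ((k + m).choose k : ℝ) * k ^ k * m ^ m * (√(2 * π * k) * √(2 * π * m)) := by
          rw [hsqrt]; ring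
      _ = _ := by rw [pow_add, div_pow, div_pow]; field_simp
      _ ≤ _ := hstirling
      _ = _ := by rw [div_pow]; field_simp
  have he : exp 1 ≤ 2 * π := by linarith [exp_one_lt_d9, pi_gt_three]
  nlinarith [exp_pos 1, show 0 ≤ X by positivity]

noncomputable def bernsteinBasis (n k : ℕ) (x : ℝ) : ℝ := n.choose k * x ^ k * (1 - x) ^ (n - k)

theorem sum_bernsteinBasis (n : ℕ) (x : ℝ) : ∑ k ∈ range (n + 1), bernsteinBasis n k x = 1 := by
  simpa [bernsteinBasis, mul_right_comm _ _ (Nat.choose _ _ : ℝ), mul_comm] using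
    (add_pow x (1 - x) n).symm

theorem succ_mul_one_sub_mul_bernsteinBasis_succ (n k : ℕ) (x : ℝ) :
    (k + 1) * (1 - x) * bernsteinBasis n (k + 1) x = (n - k : ℕ) * x * bernsteinBasis n k x := by
  unfold bernsteinBasis
  rcases lt_or_ge k n with hkn | hkn
  · have hchoose : (n.choose (k + 1) : ℝ) * (k + 1) = n.choose k * (n - k : ℕ) := by
      exact_mod_cast Nat.choose_succ_right_eq n k
    obtain ⟨j, rfl⟩ := Nat.exists_eq_add_of_lt hkn
    rw [show k + j + 1 - (k + 1) = j by omega, show k + j + 1 - k = j + 1 by omega] at *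
    rw [pow_succ, pow_succ]
    linear_combination (x ^ (k + 1) * (1 - x) ^ j * (1 - x)) * hchoose
  · simp [Nat.choose_eq_zero_of_lt (show n < k + 1 by omega), Nat.sub_eq_zero_of_le hkn]

section UnitInterval

variable {x : ℝ}

theorem bernsteinBasis_nonneg (n k : ℕ) (hx : x ∈ Set.Icc (0 : ℝ) 1) :
    0 ≤ bernsteinBasis n k x := by
  have := hx.1
  have : 0 ≤ 1 - x := sub_nonneg.2 hx.2
  unfold bernsteinBasis; positivity

theorem bernsteinBasis_unimodal (n : ℕ) (hx : x ∈ Set.Icc (0 : ℝ) 1) : ∃ m, ∀ k < n,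
    (k < m → bernsteinBasis n k x ≤ bernsteinBasis n (k + 1) x) ∧
    (m ≤ k → bernsteinBasis n (k + 1) x ≤ bernsteinBasis n k x) := by
  rcases hx.2.eq_or_lt with rfl | hx1
  · refine ⟨n, fun k hk => ⟨fun _ => ?_, fun h => absurd hk h.not_gt⟩⟩
    simpa [bernsteinBasis, Nat.sub_ne_zero_of_lt hk] using bernsteinBasis_nonneg n (k + 1) hx
  have hy : 0 ≤ (n + 1) * x := by nlinarith [hx.1]
  refine ⟨⌊(n + 1) * x⌋₊, fun k hk => ⟨fun hkm => ?_, fun hmk => ?_⟩⟩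
  all_goals
    have hr : 0 < (k + 1) * (1 - x) := by nlinarith
    have hratio := succ_mul_one_sub_mul_bernsteinBasis_succ n k x
    rw [Nat.cast_sub hk.le] at hratio
    have := bernsteinBasis_nonneg n k hx
    refine le_of_mul_le_mul_left ?_ hr
  · have : ((k + 1 : ℕ) : ℝ) ≤ (n + 1) * x := (Nat.le_floor_iff hy).1 hkm
    push_cast at this
    nlinarith
  · have : (n + 1) * x < ((k + 1 : ℕ) : ℝ) := (Nat.floor_lt hy).1 (Nat.lt_succ_of_le hmk)
    push_cast at this
    nlinarith

theorem bernsteinBasis_mul_sqrt_le {k m : ℕ} (hk : k ≠ 0) (hm : m ≠ 0)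
    (hx : x ∈ Set.Icc (0 : ℝ) 1) : bernsteinBasis (k + m) k x * √(k * m) ≤ √((k + m : ℕ) : ℝ) := by
  rw [← mul_le_mul_iff_of_pos_right (by positivity : (0 : ℝ) < ((k + m : ℕ) : ℝ) ^ (k + m))]
  calc bernsteinBasis (k + m) k x * √(k * m) * ((k + m : ℕ) : ℝ) ^ (k + m)
      = (k + m).choose k * (x ^ k * (1 - x) ^ m * ((k + m : ℕ) : ℝ) ^ (k + m)) * √(k * m) := by
        rw [bernsteinBasis, Nat.add_sub_cancel_left]; ring
    _ ≤ (k + m).choose k * (k ^ k * m ^ m) * √(k * m) := by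
        gcongr _ * ?_ * _
        exact pow_mul_one_sub_pow_mul_le hx k m
    _ ≤ _ := by linarith [choose_mul_pow_mul_pow_mul_sqrt_le hk hm]

theorem bernsteinBasis_le_sqrt_two_div {n k K : ℕ} (hK : K ≠ 0) (hk : K ≤ k) (hkn : k + K ≤ n)
    (hx : x ∈ Set.Icc (0 : ℝ) 1) : bernsteinBasis n k x ≤ √(2 / K) := by
  obtain ⟨m, rfl⟩ := Nat.exists_eq_add_of_le (le_of_add_le_left hkn)
  have hKR : (0 : ℝ) < K := by exact_mod_cast Nat.pos_of_ne_zero hK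
  have hkR : (K : ℝ) ≤ k := by exact_mod_cast hk
  have hmR : (K : ℝ) ≤ m := by exact_mod_cast (show K ≤ m by omega)
  have hk0 : (0 : ℝ) < k := hKR.trans_le hkR
  have hm0 : (0 : ℝ) < m := hKR.trans_le hmR
  calc bernsteinBasis (k + m) k x ≤ √((k + m : ℕ) : ℝ) / √(k * m) :=
        (le_div_iff₀ (sqrt_pos.2 (mul_pos hk0 hm0))).2
          (bernsteinBasis_mul_sqrt_le (by omega) (by omega) hx)
    _ = √(1 / k + 1 / m) := by
        rw [← sqrt_div (Nat.cast_nonneg _)]; congr 1; push_cast; field_simp; ring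
    _ ≤ √(1 / K + 1 / K) := by gcongr
    _ = √(2 / K) := by ring_nf

end UnitInterval

theorem eventually_abs_sub_sum_bernsteinBasis_lt {f : ℝ → ℝ} (hf : ContinuousOn f (Set.Icc 0 1))
    {ε : ℝ} (hε : 0 < ε) : ∀ᶠ n in Filter.atTop, ∀ x ∈ Set.Icc (0 : ℝ) 1,
      |f x - ∑ k ∈ range (n + 1), f (k / n) * bernsteinBasis n k x| < ε := by
  let F : C(unitInterval, ℝ) := ⟨(Set.Icc 0 1).domRestrict f, hf.domRestrict⟩
  filter_upwards [Metric.tendsto_nhds.1 (bernsteinApproximation_uniform F) ε hε] with n hn x hx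
  have := (ContinuousMap.dist_apply_le_dist ⟨x, hx⟩).trans_lt hn
  rw [Real.dist_eq, bernsteinApproximation.apply, abs_sub_comm] at this
  rw [← Fin.sum_univ_eq_sum_range (fun k => f (k / n) * bernsteinBasis n k x)]
  refine lt_of_eq_of_lt ?_ this
  congr 2
  refine sum_congr rfl fun k _ => ?_
  rw [bernstein_apply, smul_eq_mul, mul_comm]
  rfl

theorem exists_int_coeffs_abs_sum_bernsteinBasis_sub_le (g : ℕ → ℝ) (a b : ℤ) {n K : ℕ}
    (hK : K ≠ 0) (hKn : 2 * K ≤ n) {δ : ℝ} (ha : ∀ k < K, |g k - a| ≤ δ)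
    (hb : ∀ k ∈ Icc (n - K) n, |g k - b| ≤ δ) :
    ∃ q : ℕ → ℤ, ∀ x ∈ Set.Icc (0 : ℝ) 1,
      |∑ k ∈ range (n + 1), g k * bernsteinBasis n k x
        - ∑ k ∈ range (n + 1), (q k : ℝ) * bernsteinBasis n k x| ≤ δ + 4 * √(2 / K) := by
  set S : ℕ → ℝ := fun k => ∑ i ∈ range k, g i
  -- Rounding the partial sums makes the middle errors `g k - q k` telescope.
  set q : ℕ → ℤ := fun k => if k < K then a else if k < n - K then ⌊S (k + 1)⌋ - ⌊S k⌋ else b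
  refine ⟨q, fun x hx => ?_⟩
  have hB : ∀ k, 0 ≤ bernsteinBasis n k x := fun k => bernsteinBasis_nonneg n k hx
  have hmid : Ico K (n - K) ⊆ range (n + 1) := fun k hk => by
    rw [mem_Ico] at hk; rw [mem_range]; omega
  have houter : |∑ k ∈ range (n + 1) \ Ico K (n - K), (g k - q k) * bernsteinBasis n k x| ≤ δ := by
    refine abs_sum_mul_le_of_abs_le ((abs_nonneg _).trans (ha 0 (Nat.pos_of_ne_zero hK)))
      (fun k hk => ?_) (fun k _ => hB k) ?_
    · simp only [mem_sdiff, mem_range, mem_Ico, not_and, not_lt] at hk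
      by_cases hkK : k < K
      · simpa [q, hkK] using ha k hkK
      · have hkn : n - K ≤ k := hk.2 (not_lt.1 hkK)
        simpa [q, hkK, not_lt.2 hkn] using hb k (mem_Icc.2 ⟨hkn, by omega⟩)
    · rw [← sum_bernsteinBasis n x]
      exact sum_le_sum_of_subset_of_nonneg sdiff_subset fun k _ _ => hB k
  have hinner : |∑ k ∈ Ico K (n - K), (g k - q k) * bernsteinBasis n k x| ≤ 4 * √(2 / K) := by
    have hfract : ∀ k ∈ Ico K (n - K), (g k - q k) * bernsteinBasis n k x
        = (Int.fract (S (k + 1)) - Int.fract (S k)) * bernsteinBasis n k x := by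
      intro k hk
      rw [mem_Ico] at hk
      simp only [q, if_neg (not_lt.2 hk.1), if_pos hk.2, S, sum_range_succ, Int.fract]
      push_cast; ring
    have hbound : ∀ k ∈ Icc K (n - K),
        0 ≤ bernsteinBasis n k x ∧ bernsteinBasis n k x ≤ √(2 / K) := fun k hk =>
      ⟨hB k, bernsteinBasis_le_sqrt_two_div hK (mem_Icc.1 hk).1 (by grind) hx⟩
    obtain ⟨m, hm⟩ := bernsteinBasis_unimodal n hx
    have htv := sum_abs_sub_le_of_unimodal (by omega)
      (fun k hk hkm => (hm k (by grind)).1 hkm)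
      (fun k hk hmk => (hm k (by grind)).2 hmk) hbound
    rw [sum_congr rfl hfract]
    refine (abs_sum_sub_mul_le (F := fun k => Int.fract (S k)) (show K ≤ n - K by omega)
      fun k _ => ?_).trans ?_
    · rw [abs_of_nonneg (Int.fract_nonneg _)]; exact (Int.fract_lt_one _).le
    · have hK' := hbound K (mem_Icc.2 ⟨le_rfl, by omega⟩)
      have hnK := hbound (n - K) (mem_Icc.2 ⟨by omega, le_rfl⟩)
      rw [abs_of_nonneg hK'.1, abs_of_nonneg hnK.1]
      linarith
  rw [← sum_sub_distrib, ← sum_sdiff hmid]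
  simp only [← sub_mul]
  exact (abs_add_le _ _).trans (add_le_add houter hinner)

theorem abs_natCast_div_sub_one_le {n k K : ℕ} (hn : n ≠ 0) (hk : k ∈ Icc (n - K) n) :
    |(k : ℝ) / n - 1| ≤ K / n := by
  rw [mem_Icc] at hk
  have hnR : (0 : ℝ) < n := by exact_mod_cast Nat.pos_of_ne_zero hn
  have hkn : (k : ℝ) ≤ n := by exact_mod_cast hk.2
  have hnk : (n : ℝ) - k ≤ K := by
    rw [sub_le_iff_le_add]; exact_mod_cast (show n ≤ K + k by omega)
  rw [abs_sub_comm, abs_of_nonneg (sub_nonneg.2 ((div_le_one hnR).2 hkn)), one_sub_div hnR.ne']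
  gcongr

theorem bernstein_lattice_dense (f : ℝ → ℝ) (hf : ContinuousOn f (Set.Icc (0:ℝ) 1))
    (hf0 : ∃ a : ℤ, f 0 = (a : ℝ)) (hf1 : ∃ b : ℤ, f 1 = (b : ℝ))
    (ε : ℝ) (hε : 0 < ε) :
    ∃ (n : ℕ) (q : ℕ → ℤ), ∀ x ∈ Set.Icc (0:ℝ) 1,
      |f x - ∑ k ∈ Finset.range (n + 1),
          (q k : ℝ) * ((n.choose k : ℝ) * x ^ k * (1 - x) ^ (n - k))| < ε := by
  obtain ⟨a, ha⟩ := hf0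
  obtain ⟨b, hb⟩ := hf1
  obtain ⟨τ, hτ, hfτ⟩ := Metric.uniformContinuousOn_iff.1
    (isCompact_Icc.uniformContinuousOn_of_continuous hf) (ε / 3) (by positivity)
  have hsqrt : Filter.Tendsto (fun K : ℕ => 4 * √(2 / K)) Filter.atTop (nhds 0) := by
    simpa using ((tendsto_const_div_atTop_nhds_zero_nat 2).sqrt).const_mul 4
  obtain ⟨K, hK, hKε⟩ := ((Filter.eventually_ne_atTop 0).and
    (hsqrt.eventually (gt_mem_nhds (by positivity : 0 < ε / 3)))).exists
  obtain ⟨n, happrox, hKn, hKτ⟩ := ((eventually_abs_sub_sum_bernsteinBasis_lt hf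
    (by positivity : 0 < ε / 3)).and ((Filter.eventually_ge_atTop (2 * K)).and
    ((tendsto_const_div_atTop_nhds_zero_nat (K : ℝ)).eventually (gt_mem_nhds hτ)))).exists
  have hn : (0 : ℝ) < n := by exact_mod_cast (show 0 < n by omega)
  have hnear : ∀ k ≤ n, ∀ y ∈ Set.Icc (0 : ℝ) 1, |(k : ℝ) / n - y| ≤ K / n →
      |f (k / n) - f y| ≤ ε / 3 := fun k hk y hy hky =>
    (hfτ _ ⟨by positivity, div_le_one_of_le₀ (by exact_mod_cast hk) hn.le⟩ y hy
      (hky.trans_lt hKτ)).le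
  obtain ⟨q, hq⟩ := exists_int_coeffs_abs_sum_bernsteinBasis_sub_le (fun k => f (k / n)) a b
    hK hKn (δ := ε / 3)
    (fun k hk => ha ▸ hnear k (by omega) 0 (by simp) (by
      rw [sub_zero, abs_of_nonneg (by positivity)]; gcongr))
    (fun k hk => hb ▸ hnear k (mem_Icc.1 hk).2 1 (by simp)
      (abs_natCast_div_sub_one_le (by omega) hk))
  refine ⟨n, q, fun x hx => ?_⟩
  change |f x - ∑ k ∈ range (n + 1), (q k : ℝ) * bernsteinBasis n k x| < ε
  linarith [abs_sub_le (f x) (∑ k ∈ range (n + 1), f (k / n) * bernsteinBasis n k x)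
    (∑ k ∈ range (n + 1), (q k : ℝ) * bernsteinBasis n k x), happrox x hx, hq x hx]
end
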